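/- Let K, C ⊆ ℝⁿ be convex bodies with C having nonempty interior. If K is complete with respect to C, then every boundary point of K is the endpoint of a diametrical segment: for every x in the boundary of K there exists y ∈ K such that 2·R(conv({x,y}), C) = D(K,C). -/

import Mathlib

open Pointwise

/-- Euclidean n-space. -/
abbrev Euc (n : ℕ) : Type := EuclideanSpace ℝ (Fin n)

/-- A convex body: a nonempty compact convex subset of ℝⁿ. -/
def IsBody {n : ℕ} (K : Set (Euc n)) : Prop := Convex ℝ K ∧ IsCompact K ∧ K.Nonempty

/-- Support function `h(K,u) = sup_{x ∈ K} ⟨u,x⟩`. -/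
noncomputable def suppF {n : ℕ} (K : Set (Euc n)) (u : Euc n) : ℝ :=
  sSup ((fun x => (inner ℝ u x : ℝ)) '' K)

/-- The s-breadth `b_s(K,C) = 2 h(K-K,s) / h(C-C,s)` (here `K - K` is the pointwise
(Minkowski) difference body). -/
noncomputable def breadthF {n : ℕ} (K C : Set (Euc n)) (s : Euc n) : ℝ :=
  2 * suppF (K - K) s / suppF (C - C) s

/-- The diameter `D(K,C) = sup_{s ≠ 0} b_s(K,C)`. -/
noncomputable def diamF {n : ℕ} (K C : Set (Euc n)) : ℝ :=
  sSup {d : ℝ | ∃ s : Euc n, s ≠ 0 ∧ d = breadthF K C s}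

/-- The minimal width `w(K,C) = inf_{s ≠ 0} b_s(K,C)`. -/
noncomputable def widthF {n : ℕ} (K C : Set (Euc n)) : ℝ :=
  sInf {d : ℝ | ∃ s : Euc n, s ≠ 0 ∧ d = breadthF K C s}

/-- The circumradius `R(K,C) = inf {λ ≥ 0 : ∃ c, K ⊆ c + λ•C}`. -/
noncomputable def circumF {n : ℕ} (K C : Set (Euc n)) : ℝ :=
  sInf {l : ℝ | 0 ≤ l ∧ ∃ c : Euc n, K ⊆ c +ᵥ l • C}

/-- The inradius `r(K,C) = sup {λ ≥ 0 : ∃ c, c + λ•C ⊆ K}`. -/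
noncomputable def inradF {n : ℕ} (K C : Set (Euc n)) : ℝ :=
  sSup {l : ℝ | 0 ≤ l ∧ ∃ c : Euc n, c +ᵥ l • C ⊆ K}

/-- `K` is (diametrically) complete with respect to `C`. -/
def CompleteWrt {n : ℕ} (K C : Set (Euc n)) : Prop :=
  ∀ K' : Set (Euc n), IsBody K' → K ⊂ K' → diamF K C < diamF K' C

/-- `K` is reduced with respect to `C`. -/
def ReducedWrt {n : ℕ} (K C : Set (Euc n)) : Prop :=
  ∀ K' : Set (Euc n), IsBody K' → K' ⊂ K → widthF K' C < widthF K C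

/-- `K` is of constant width with respect to `C`. -/
def ConstWidthWrt {n : ℕ} (K C : Set (Euc n)) : Prop := widthF K C = diamF K C

/-- `C` is perfect: every complete body is of constant width. -/
def PerfectBody {n : ℕ} (C : Set (Euc n)) : Prop :=
  ∀ K : Set (Euc n), IsBody K → CompleteWrt K C → ConstWidthWrt K C

/-- A polytope: the convex hull of finitely many points. -/
def IsPolytope {n : ℕ} (P : Set (Euc n)) : Prop :=
  ∃ V : Finset (Euc n), P = convexHull ℝ (V : Set (Euc n))

/-- An n-simplex: the convex hull of n+1 affinely independent points. -/
def IsSimplex {n : ℕ} (S : Set (Euc n)) : Prop :=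
  ∃ p : Fin (n + 1) → Euc n, AffineIndependent ℝ p ∧ S = convexHull ℝ (Set.range p)

/-- The Minkowski asymmetry `s(K) = R(-K,K)`. -/
noncomputable def minkAsym {n : ℕ} (K : Set (Euc n)) : ℝ := circumF (-K) K

/-- `K` is Minkowski-centered: `-K ⊆ s(K) • K`. -/
def MinkCentered {n : ℕ} (K : Set (Euc n)) : Prop := -K ⊆ minkAsym K • K

/-- Optimal containment `A ⊆^opt B`. -/
def SubsetOpt {n : ℕ} (A B : Set (Euc n)) : Prop :=
  A ⊆ B ∧ ∀ ρ : ℝ, ρ < 1 → ∀ c : Euc n, ¬ (A ⊆ c +ᵥ ρ • B)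

/-- The face of `P` with outer normal `a`. -/
noncomputable def faceOf {n : ℕ} (P : Set (Euc n)) (a : Euc n) : Set (Euc n) :=
  {x ∈ P | (inner ℝ a x : ℝ) = suppF P a}

/-- `F` is a facet (an (n-1)-dimensional face) of `P`. -/
def IsFacetOf {n : ℕ} (P F : Set (Euc n)) : Prop :=
  ∃ a : Euc n, a ≠ 0 ∧ F = faceOf P a ∧ Module.finrank ℝ (vectorSpan ℝ F) = n - 1

/-- `Kstar` is a completion of `K` with respect to `C`. -/
def IsCompletionOf {n : ℕ} (Kstar K C : Set (Euc n)) : Prop :=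
  IsBody Kstar ∧ K ⊆ Kstar ∧ diamF Kstar C = diamF K C ∧ CompleteWrt Kstar C

/-!
Write `‖w‖` for the gauge of the difference body `C - C`. Then `R(conv {x, y}, C) = ‖x - y‖`, and
`D(K, C) = 2 max_{u, v ∈ K} ‖u - v‖`: one inequality is `⟨s, w⟩ ≤ ‖w‖ h(C - C, s)`, the other is
Hahn–Banach separation from the scaled body `t • (C - C)`.

Let `y ∈ K` maximise `‖x - y‖`. If `2 ‖x - y‖ < D(K, C)`, take `p ∉ K` very close to the boundary
point `x`. By the triangle inequality every point of `K` is within `D(K, C) / 2` of `p`, and a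
seminorm-diameter does not grow under taking convex hulls, so `conv (K ∪ {p}) ⊋ K` has the same
diameter as `K`, contradicting completeness.
-/

open Set Filter Topology

theorem IsCompact.convexJoin {E : Type*} [AddCommGroup E] [Module ℝ E] [TopologicalSpace E]
    [ContinuousAdd E] [ContinuousSMul ℝ E] {s t : Set E} (hs : IsCompact s) (ht : IsCompact t) :
    IsCompact (_root_.convexJoin ℝ s t) := by
  have h : _root_.convexJoin ℝ s t =
      (fun q : E × E × ℝ => (1 - q.2.2) • q.1 + q.2.2 • q.2.1) '' s ×ˢ t ×ˢ Icc 0 1 := by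
    ext z
    simp only [mem_convexJoin, segment_eq_image, mem_image, mem_prod, Prod.exists]
    aesop
  rw [h]
  exact (hs.prod (ht.prod isCompact_Icc)).image (by fun_prop)

theorem IsCompact.sub_self {E : Type*} [AddGroup E] [TopologicalSpace E] [IsTopologicalAddGroup E]
    {s : Set E} (hs : IsCompact s) : IsCompact (s - s) := by
  rw [← image2_sub, ← image_uncurry_prod]
  exact (hs.prod hs).image continuous_sub

theorem sub_self_mem_nhds_zero {E : Type*} [AddGroup E] [TopologicalSpace E]
    [IsTopologicalAddGroup E] {s : Set E} (hs : (interior s).Nonempty) : s - s ∈ 𝓝 0 := by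
  obtain ⟨c, hc⟩ := hs
  refine mem_nhds_iff.2 ⟨interior s - interior s, sub_subset_sub interior_subset interior_subset,
    isOpen_interior.sub_left, ?_⟩
  simpa using sub_mem_sub hc hc

theorem neg_mem_sub_self {E : Type*} [AddGroup E] {s : Set E} {x : E} (hx : x ∈ s - s) :
    -x ∈ s - s := by
  obtain ⟨a, ha, b, hb, rfl⟩ := hx
  simpa using sub_mem_sub hb ha

theorem gauge_sub_self_sub_comm {E : Type*} [AddCommGroup E] [Module ℝ E] (s : Set E) (u v : E) :
    gauge (s - s) (u - v) = gauge (s - s) (v - u) := by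
  rw [← neg_sub v u, gauge_neg fun _ => neg_mem_sub_self]

theorem Seminorm.map_sub_le_of_mem_convexHull {E : Type*} [AddCommGroup E] [Module ℝ E]
    (p : Seminorm ℝ E) {S : Set E} {r : ℝ} (h : ∀ u ∈ S, ∀ v ∈ S, p (u - v) ≤ r) {u v : E}
    (hu : u ∈ convexHull ℝ S) (hv : v ∈ convexHull ℝ S) : p (u - v) ≤ r := by
  have := convexHull_min (s := S ×ˢ S)
    (t := (p.comp (LinearMap.fst ℝ E E - LinearMap.snd ℝ E E)).closedBall 0 r)
    (fun q hq => by simpa using h _ hq.1 _ hq.2) (Seminorm.convex_closedBall _ _ _)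
  rw [convexHull_prod] at this
  simpa using this (mk_mem_prod hu hv)

variable {n : ℕ}

section SupportFunction

variable {K : Set (Euc n)}

theorem inner_le_suppF (hK : IsCompact K) {x : Euc n} (hx : x ∈ K) (s : Euc n) :
    inner ℝ s x ≤ suppF K s :=
  le_csSup (hK.image (continuous_const.inner continuous_id)).bddAbove ⟨x, hx, rfl⟩

theorem suppF_le (hK : K.Nonempty) {s : Euc n} {M : ℝ} (h : ∀ x ∈ K, inner ℝ s x ≤ M) :
    suppF K s ≤ M :=
  csSup_le (hK.image _) (forall_mem_image.2 h)

theorem suppF_nonneg (hK : IsCompact K) (h0 : (0 : Euc n) ∈ K) (s : Euc n) : 0 ≤ suppF K s := by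
  simpa using inner_le_suppF hK h0 s

end SupportFunction

section Gauge

variable {B : Set (Euc n)}

theorem inner_le_gauge_mul_suppF (hB : IsCompact B) (hB0 : B ∈ 𝓝 0) (s w : Euc n) :
    inner ℝ s w ≤ gauge B w * suppF B s := by
  rcases (suppF_nonneg hB (mem_of_mem_nhds hB0) s).eq_or_lt with h | h
  · obtain ⟨r, hr, b, hb, rfl⟩ := (absorbent_nhds_zero (𝕜 := ℝ) hB0).gauge_set_nonempty (x := w)
    have := inner_le_suppF hB hb s
    rw [← h] at this ⊢
    simp only [real_inner_smul_right, mul_zero]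
    exact mul_nonpos_of_nonneg_of_nonpos hr.le this
  · rw [← div_le_iff₀ h]
    refine le_csInf (absorbent_nhds_zero hB0).gauge_set_nonempty ?_
    rintro r ⟨hr, b, hb, rfl⟩
    rw [div_le_iff₀ h, real_inner_smul_right]
    exact mul_le_mul_of_nonneg_left (inner_le_suppF hB hb s) (le_of_lt hr)

theorem suppF_pos (hB : IsCompact B) (hB0 : B ∈ 𝓝 0) {s : Euc n} (hs : s ≠ 0) :
    0 < suppF B s := by
  have h := inner_le_gauge_mul_suppF hB hB0 s s
  rw [real_inner_self_eq_norm_sq] at h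
  exact pos_of_mul_pos_right ((pow_pos (norm_pos_iff.2 hs) 2).trans_le h) (gauge_nonneg s)

theorem exists_mul_suppF_lt_inner (hBc : Convex ℝ B) (hB : IsCompact B) (hB0 : (0 : Euc n) ∈ B)
    {t : ℝ} (ht : 0 ≤ t) {w : Euc n} (hw : t < gauge B w) :
    ∃ s ≠ 0, t * suppF B s < inner ℝ s w := by
  have hwt : w ∉ t • B := fun h => (gauge_le_of_mem ht h).not_gt hw
  obtain ⟨f, u, hfB, hfw⟩ := geometric_hahn_banach_closed_point (hBc.smul t)
    (hB.smul t).isClosed hwt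
  obtain ⟨s, hs⟩ : ∃ s : Euc n, ∀ x, inner ℝ s x = f x :=
    ⟨_, fun _ => InnerProductSpace.toDual_symm_apply⟩
  have hu : 0 < u := by simpa using hfB 0 (zero_mem_smul_set hB0)
  refine ⟨s, fun h0 => ?_, ?_⟩
  · have := hs w
    rw [h0, inner_zero_left] at this
    linarith
  · have htB : t * suppF B s ≤ u := by
      rcases ht.eq_or_lt with rfl | ht
      · linarith
      refine (le_div_iff₀' ht).1 (suppF_le ⟨0, hB0⟩ fun b hb => (le_div_iff₀' ht).2 ?_)
      have := hfB (t • b) (smul_mem_smul_set hb)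
      rw [← hs, real_inner_smul_right] at this
      exact this.le
    rw [hs]
    linarith

end Gauge

theorem sInf_setOf_nonneg_mem_smul_eq_gauge (B : Set (Euc n)) (v : Euc n) :
    sInf {l : ℝ | 0 ≤ l ∧ v ∈ l • B} = gauge B v := by
  by_cases h0 : (0 : ℝ) ∈ {l : ℝ | 0 ≤ l ∧ v ∈ l • B}
  · obtain rfl : v = 0 := zero_smul_set_subset B h0.2
    rw [gauge_zero]
    exact IsLeast.csInf_eq ⟨h0, fun _ hl => hl.1⟩
  · rw [gauge_def]
    congr 1
    ext l
    refine ⟨fun hl => ⟨hl.1.lt_of_ne ?_, hl.2⟩, fun hl => ⟨hl.1.le, hl.2⟩⟩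
    rintro rfl
    exact h0 hl

theorem exists_segment_subset_vadd_smul_iff {C : Set (Euc n)} (hC : Convex ℝ C) (x y : Euc n)
    (l : ℝ) : (∃ c : Euc n, segment ℝ x y ⊆ c +ᵥ l • C) ↔ x - y ∈ l • (C - C) := by
  constructor
  · rintro ⟨c, hc⟩
    obtain ⟨_, ⟨a, ha, rfl⟩, hxa⟩ := hc (left_mem_segment ℝ x y)
    obtain ⟨_, ⟨b, hb, rfl⟩, hyb⟩ := hc (right_mem_segment ℝ x y)
    refine ⟨a - b, sub_mem_sub ha hb, ?_⟩
    simp only [← hxa, ← hyb, smul_sub, vadd_eq_add]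
    abel
  · rintro ⟨_, ⟨a, ha, b, hb, rfl⟩, hxy⟩
    refine ⟨x - l • a, ((hC.smul l).vadd _).segment_subset ⟨l • a, smul_mem_smul_set ha, ?_⟩
      ⟨l • b, smul_mem_smul_set hb, ?_⟩⟩
    · simp
    · simp only [smul_sub] at hxy
      simp only [vadd_eq_add]
      rw [← sub_sub_cancel x y, ← hxy]
      abel

theorem circumF_segment {C : Set (Euc n)} (hC : Convex ℝ C) (x y : Euc n) :
    circumF (segment ℝ x y) C = gauge (C - C) (x - y) := by
  simp only [circumF, exists_segment_subset_vadd_smul_iff hC]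
  exact sInf_setOf_nonneg_mem_smul_eq_gauge _ _

section Diameter

variable {A C : Set (Euc n)}

theorem breadthF_nonneg (hA : IsCompact A) (hAne : A.Nonempty) (hC : IsCompact C)
    (hCne : C.Nonempty) (s : Euc n) : 0 ≤ breadthF A C s := by
  obtain ⟨a, ha⟩ := hAne
  obtain ⟨c, hc⟩ := hCne
  have hA0 := suppF_nonneg hA.sub_self (sub_self a ▸ sub_mem_sub ha ha) s
  have hC0 := suppF_nonneg hC.sub_self (sub_self c ▸ sub_mem_sub hc hc) s
  unfold breadthF
  positivity

theorem breadthF_le_of_forall_gauge_le (hC : IsCompact C) (hCi : (interior C).Nonempty)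
    (hAne : A.Nonempty) {M : ℝ} (h : ∀ u ∈ A, ∀ v ∈ A, 2 * gauge (C - C) (u - v) ≤ M)
    {s : Euc n} (hs : s ≠ 0) : breadthF A C s ≤ M := by
  have hC0 := sub_self_mem_nhds_zero hCi
  have hAA : suppF (A - A) s ≤ M / 2 * suppF (C - C) s := by
    refine suppF_le (hAne.sub hAne) ?_
    rintro _ ⟨u, hu, v, hv, rfl⟩
    calc inner ℝ s (u - v) ≤ gauge (C - C) (u - v) * suppF (C - C) s :=
          inner_le_gauge_mul_suppF hC.sub_self hC0 s _
      _ ≤ M / 2 * suppF (C - C) s := by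
          gcongr
          · exact suppF_nonneg hC.sub_self (mem_of_mem_nhds hC0) s
          · linarith [h u hu v hv]
  rw [breadthF, div_le_iff₀ (suppF_pos hC.sub_self hC0 hs)]
  linarith

theorem diamF_le_of_forall_gauge_le (hC : IsCompact C) (hCi : (interior C).Nonempty)
    (hAne : A.Nonempty) {M : ℝ} (h : ∀ u ∈ A, ∀ v ∈ A, 2 * gauge (C - C) (u - v) ≤ M) :
    diamF A C ≤ M := by
  obtain ⟨a, ha⟩ := hAne
  refine Real.sSup_le ?_ (by simpa using h a ha a ha)
  rintro _ ⟨s, hs, rfl⟩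
  exact breadthF_le_of_forall_gauge_le hC hCi ⟨a, ha⟩ h hs

theorem breadthF_le_diamF (hC : Convex ℝ C) (hCc : IsCompact C) (hCi : (interior C).Nonempty)
    (hA : IsCompact A) (hAne : A.Nonempty) {s : Euc n} (hs : s ≠ 0) :
    breadthF A C s ≤ diamF A C := by
  obtain ⟨M, hM⟩ := hA.sub_self.bddAbove_image
    (continuous_gauge (hC.sub hC) (sub_self_mem_nhds_zero hCi)).continuousOn
  refine le_csSup ⟨2 * M, ?_⟩ ⟨s, hs, rfl⟩
  rintro _ ⟨s, hs, rfl⟩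
  refine breadthF_le_of_forall_gauge_le hCc hCi hAne (fun u hu v hv => ?_) hs
  linarith [hM (mem_image_of_mem _ (sub_mem_sub hu hv))]

theorem diamF_nonneg (hC : IsCompact C) (hCne : C.Nonempty) (hA : IsCompact A)
    (hAne : A.Nonempty) : 0 ≤ diamF A C :=
  Real.sSup_nonneg fun _ ⟨s, _, hs⟩ => hs ▸ breadthF_nonneg hA hAne hC hCne s

theorem two_mul_gauge_le_diamF (hC : Convex ℝ C) (hCc : IsCompact C)
    (hCi : (interior C).Nonempty) (hA : IsCompact A) {u v : Euc n} (hu : u ∈ A) (hv : v ∈ A) :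
    2 * gauge (C - C) (u - v) ≤ diamF A C := by
  have hD := diamF_nonneg hCc (hCi.mono interior_subset) hA ⟨u, hu⟩
  by_contra! hlt
  obtain ⟨s, hs, hsep⟩ := exists_mul_suppF_lt_inner (hC.sub hC) hCc.sub_self
    (mem_of_mem_nhds (sub_self_mem_nhds_zero hCi)) (by linarith)
    (by linarith : diamF A C / 2 < gauge (C - C) (u - v))
  have hbr := breadthF_le_diamF hC hCc hCi hA ⟨u, hu⟩ hs
  have huv := inner_le_suppF hA.sub_self (sub_mem_sub hu hv) s
  rw [breadthF, div_le_iff₀ (suppF_pos hCc.sub_self (sub_self_mem_nhds_zero hCi) hs)] at hbr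
  linarith

theorem diamF_convexHull_le (hC : Convex ℝ C) (hCc : IsCompact C) (hCi : (interior C).Nonempty)
    {S : Set (Euc n)} (hS : S.Nonempty) {M : ℝ}
    (h : ∀ u ∈ S, ∀ v ∈ S, 2 * gauge (C - C) (u - v) ≤ M) : diamF (convexHull ℝ S) C ≤ M := by
  have hbal : Balanced ℝ (C - C) :=
    (balanced_iff_neg_mem (hC.sub hC)).2 fun _ => neg_mem_sub_self
  let q := gaugeSeminorm hbal (hC.sub hC) (absorbent_nhds_zero (sub_self_mem_nhds_zero hCi))
  refine diamF_le_of_forall_gauge_le hCc hCi hS.convexHull fun u hu v hv => ?_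
  have huv := q.map_sub_le_of_mem_convexHull
    (fun u hu v hv => show gauge (C - C) (u - v) ≤ M / 2 by linarith [h u hu v hv]) hu hv
  simp only [q, gaugeSeminorm_toFun] at huv
  linarith

end Diameter

theorem CompleteWrt.exists_diamF_lt_two_mul_gauge {K C : Set (Euc n)} (hcomp : CompleteWrt K C)
    (hK : IsBody K) (hC : IsBody C) (hCi : (interior C).Nonempty) {p : Euc n} (hp : p ∉ K) :
    ∃ u ∈ K, diamF K C < 2 * gauge (C - C) (u - p) := by
  by_contra! hfar
  obtain ⟨hKconv, hKc, hKne⟩ := hK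
  have hK' : IsBody (convexHull ℝ (insert p K)) := by
    refine ⟨convex_convexHull ℝ _, ?_, (insert_nonempty p K).convexHull⟩
    rw [convexHull_insert hKne, hKconv.convexHull_eq]
    exact isCompact_singleton.convexJoin hKc
  have hKK' : K ⊂ convexHull ℝ (insert p K) := ssubset_iff_subset_not_subset.2
    ⟨(subset_insert p K).trans (subset_convexHull ℝ _),
      fun h => hp (h (subset_convexHull ℝ _ (mem_insert p K)))⟩
  refine (hcomp _ hK' hKK').not_ge (diamF_convexHull_le hC.1 hC.2.1 hCi (insert_nonempty p K) ?_)
  rintro u (rfl | hu) v (rfl | hv)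
  · simpa using diamF_nonneg hC.2.1 hC.2.2 hKc hKne
  · linarith [hfar v hv, gauge_sub_self_sub_comm C u v]
  · exact hfar u hu
  · exact two_mul_gauge_le_diamF hC.1 hC.2.1 hCi hKc hu hv

/-- every boundary point of a complete body is the endpoint of a
diametrical segment. -/
theorem complete_boundary_diametrical_segment {n : ℕ} (K C : Set (Euc n))
    (hK : IsBody K) (hC : IsBody C) (hCint : (interior C).Nonempty)
    (hcomp : CompleteWrt K C) :
    ∀ x ∈ frontier K, ∃ y ∈ K, 2 * circumF (segment ℝ x y) C = diamF K C := by
  intro x hx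
  have hB0 := sub_self_mem_nhds_zero hCint
  have hdist : Continuous fun u => gauge (C - C) (x - u) :=
    (continuous_gauge (hC.1.sub hC.1) hB0).comp (continuous_const.sub continuous_id)
  have hxK : x ∈ K := hK.2.1.isClosed.frontier_subset hx
  obtain ⟨y, hyK, hy⟩ := hK.2.1.exists_isMaxOn hK.2.2 hdist.continuousOn
  refine ⟨y, hyK, ?_⟩
  rw [circumF_segment hC.1]
  refine (two_mul_gauge_le_diamF hC.1 hC.2.1 hCint hK.2.1 hxK hyK).antisymm
    (not_lt.1 fun hlt => ?_)
  have hnear : {p | 2 * gauge (C - C) (x - p) < diamF K C - 2 * gauge (C - C) (x - y)} ∈ 𝓝 x :=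
    (continuous_const.mul hdist).tendsto x (Iio_mem_nhds (by simpa using hlt))
  obtain ⟨p, hpx, hpK⟩ :=
    mem_closure_iff_nhds.1 (by rw [closure_compl]; exact hx.2 : x ∈ closure Kᶜ) _ hnear
  obtain ⟨u, huK, hu⟩ := hcomp.exists_diamF_lt_two_mul_gauge hK hC hCint hpK
  have htri : gauge (C - C) (u - p) ≤ gauge (C - C) (x - u) + gauge (C - C) (x - p) := by
    rw [gauge_sub_self_sub_comm C x u, ← sub_add_sub_cancel u x p]
    exact gauge_add_le (hC.1.sub hC.1) (absorbent_nhds_zero hB0) _ _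
  linarith [show gauge (C - C) (x - u) ≤ gauge (C - C) (x - y) from hy huK,
    show 2 * gauge (C - C) (x - p) < _ from hpx]
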